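/- arXiv:1802.02867 — 5 statements merged into one kernel-verified Lean document; each statement's English description precedes it below -/
import Mathlib

section
/- Let X be a Hausdorff topological space, Φ a global semiflow on X, and 𝒜 a closed attractor of Φ with region of attraction Ω(𝒜). Assume there exists a continuous function ψ : Ω(𝒜) → [0,∞) such that ψ(x) = 0 if and only if x ∈ 𝒜. Then there exists a continuous function ζ : Ω(𝒜) → [0,∞) such that: ζ(x) = 0 if and only if x ∈ 𝒜; for every x ∈ Ω(𝒜)∖𝒜 and every t > 0 one has Φ(t,x) ∈ Ω(𝒜) and ζ(Φ(t,x)) < ζ(x); and moreover, if for every a ≥ 0 the set {x ∈ Ω(𝒜) : ψ(x) ≤ a} is closed in X, then for every a ≥ 0 the set {x ∈ Ω(𝒜) : ζ(x) ≤ a} is closed in X. -/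
/-!
The Lyapunov function is `ζ x = ⨆ t ≥ 0, ψ (Φ (t, x)) * gain t`, where `gain` is bounded, strictly
increasing and `gain 0 = 1`. Since `ψ → 0` along orbits, the supremum for `Φ (s, x)` is attained at
some time `t₀`, and the orbit of `x` meets the same value of `ψ` at time `t₀ + s` with a strictly
larger weight: this is the strict decrease. Points near `x ∈ Ω(A)` enter the uniformly attracted
neighbourhood `U` after a common time, so near `x` the supremum is effectively taken over a compact
time interval, which gives continuity. Finally `ψ ≤ ζ`, so sublevel sets of `ζ` are relatively
closed subsets of those of `ψ`.
-/

open scoped NNReal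

/-- `A` attracts `B` under the semiflow `Φ`: for every open `V ⊇ A` there is `T` such that
`Φ(t, b) ∈ V` for all `t > T` and `b ∈ B`. -/
def Attracts {X : Type*} [TopologicalSpace X] (Φ : ℝ≥0 × X → X) (A B : Set X) : Prop :=
  ∀ V : Set X, IsOpen V → A ⊆ V → ∃ T : ℝ≥0, ∀ t : ℝ≥0, T < t → ∀ b ∈ B, Φ (t, b) ∈ V

/-- `A` is invariant under the semiflow `Φ`: `Φ(t, ·)` maps `A` onto `A` for every `t ≥ 0`. -/
def IsInvariantSet {X : Type*} (Φ : ℝ≥0 × X → X) (A : Set X) : Prop :=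
  ∀ t : ℝ≥0, (fun x => Φ (t, x)) '' A = A

/-- `A` is an attractor of the semiflow `Φ`: a nonempty, sequentially compact, invariant set
attracting a neighbourhood `U` of its closure, and maximal among sequentially compact
invariant subsets of `U`. -/
def IsAttractor {X : Type*} [TopologicalSpace X] (Φ : ℝ≥0 × X → X) (A : Set X) : Prop :=
  A.Nonempty ∧ IsSeqCompact A ∧ IsInvariantSet Φ A ∧
    ∃ U : Set X, closure A ⊆ interior U ∧ Attracts Φ A U ∧
      ∀ S : Set X, S ⊆ U → IsSeqCompact S → IsInvariantSet Φ S → S ⊆ A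

/-- The region of attraction `Ω(A)` of `A`: all points attracted by `A`. -/
def attractionRegion {X : Type*} [TopologicalSpace X] (Φ : ℝ≥0 × X → X) (A : Set X) :
    Set X :=
  {x | Attracts Φ A {x}}

open Filter Topology Set

section Attraction

variable {X : Type*} {Φ : ℝ≥0 × X → X} {A B : Set X}

theorem IsInvariantSet.mapsTo (hA : IsInvariantSet Φ A) (t : ℝ≥0) :
    MapsTo (fun x => Φ (t, x)) A A :=
  fun x hx => (hA t).subset ⟨x, hx, rfl⟩

variable [TopologicalSpace X]

theorem Attracts.mono (h : Attracts Φ A B) {B' : Set X} (hB : B' ⊆ B) : Attracts Φ A B' :=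
  fun V hV hAV => (h V hV hAV).imp fun _ hT t ht b hb => hT t ht b (hB hb)

theorem Attracts.subset_attractionRegion (h : Attracts Φ A B) : B ⊆ attractionRegion Φ A :=
  fun _ hx => h.mono (singleton_subset_iff.2 hx)

theorem IsInvariantSet.attracts_self (hA : IsInvariantSet Φ A) : Attracts Φ A A :=
  fun _ _ hAV => ⟨0, fun t _ _ hb => hAV (hA.mapsTo t hb)⟩

theorem Attracts.image_flow (hadd : ∀ (t s : ℝ≥0) (x : X), Φ (t + s, x) = Φ (t, Φ (s, x)))
    (h : Attracts Φ A B) (s : ℝ≥0) : Attracts Φ A ((fun x => Φ (s, x)) '' B) := by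
  intro V hV hAV
  obtain ⟨T, hT⟩ := h V hV hAV
  refine ⟨T, ?_⟩
  rintro t ht _ ⟨b, hb, rfl⟩
  rw [← hadd]
  exact hT _ (ht.trans_le le_self_add) b hb

theorem Attracts.preimage_flow (hadd : ∀ (t s : ℝ≥0) (x : X), Φ (t + s, x) = Φ (t, Φ (s, x)))
    (h : Attracts Φ A B) (s : ℝ≥0) : Attracts Φ A ((fun x => Φ (s, x)) ⁻¹' B) := by
  intro V hV hAV
  obtain ⟨T, hT⟩ := h V hV hAV
  refine ⟨T + s, fun t ht b hb => ?_⟩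
  rw [← tsub_add_cancel_of_le (le_add_self.trans ht.le), hadd]
  exact hT _ (lt_tsub_iff_right.2 ht) _ hb

theorem mapsTo_flow_attractionRegion
    (hadd : ∀ (t s : ℝ≥0) (x : X), Φ (t + s, x) = Φ (t, Φ (s, x))) (s : ℝ≥0) :
    MapsTo (fun x => Φ (s, x)) (attractionRegion Φ A) (attractionRegion Φ A) := fun x hx =>
  (by simpa using Attracts.image_flow hadd hx s : Attracts Φ A {Φ (s, x)})

theorem exists_mem_nhds_attracts (hcont : Continuous Φ)
    (hadd : ∀ (t s : ℝ≥0) (x : X), Φ (t + s, x) = Φ (t, Φ (s, x))) {U : Set X}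
    (hAU : A ⊆ interior U) (hU : Attracts Φ A U) {x : X} (hx : x ∈ attractionRegion Φ A) :
    ∃ N ∈ 𝓝 x, Attracts Φ A N := by
  obtain ⟨T, hT⟩ := hx (interior U) isOpen_interior hAU
  have hflow : Continuous fun y => Φ (T + 1, y) :=
    hcont.comp (continuous_const.prodMk continuous_id)
  have hxU : Φ (T + 1, x) ∈ interior U := hT _ (lt_add_of_pos_right T one_pos) x rfl
  exact ⟨_, hflow.continuousAt.preimage_mem_nhds (isOpen_interior.mem_nhds hxU),
    (hU.mono interior_subset).preimage_flow hadd _⟩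

theorem isOpen_attractionRegion (hcont : Continuous Φ)
    (hadd : ∀ (t s : ℝ≥0) (x : X), Φ (t + s, x) = Φ (t, Φ (s, x))) {U : Set X}
    (hAU : A ⊆ interior U) (hU : Attracts Φ A U) : IsOpen (attractionRegion Φ A) :=
  isOpen_iff_mem_nhds.2 fun _ hx =>
    let ⟨_, hN, hNA⟩ := exists_mem_nhds_attracts hcont hadd hAU hU hx
    mem_of_superset hN hNA.subset_attractionRegion

theorem Attracts.tendstoUniformlyOn_comp {Y : Type*} [PseudoMetricSpace Y] {f : X → Y}
    {O : Set X} {c : Y} (h : Attracts Φ A B) (hO : IsOpen O) (hf : ContinuousOn f O)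
    (hAO : A ⊆ O) (hfA : ∀ a ∈ A, f a = c) :
    TendstoUniformlyOn (fun t b => f (Φ (t, b))) (fun _ => c) atTop B := by
  refine Metric.tendstoUniformlyOn_iff.2 fun ε hε => ?_
  obtain ⟨T, hT⟩ := h _ (hf.isOpen_inter_preimage hO (Metric.isOpen_ball (x := c) (ε := ε)))
    fun a ha => ⟨hAO ha, by simp [hfA a ha, hε]⟩
  filter_upwards [eventually_gt_atTop T] with t ht b hb
  rw [dist_comm]
  exact (hT t ht b hb).2

end Attraction

theorem Continuous.bddAbove_range_of_tendsto_cocompact {β : Type*} [TopologicalSpace β]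
    {h : β → ℝ} (hh : Continuous h) {c : ℝ} (hlim : Tendsto h (cocompact β) (𝓝 c)) :
    BddAbove (range h) := by
  obtain ⟨K, hK, hKc⟩ := mem_cocompact.1 (hlim (Iic_mem_nhds (lt_add_one c)))
  refine ((hK.image hh).bddAbove.union (bddAbove_Iic (a := c + 1))).mono ?_
  rintro _ ⟨x, rfl⟩
  by_cases hx : x ∈ K
  · exact Or.inl (mem_image_of_mem h hx)
  · exact Or.inr (hKc hx)

noncomputable def gain (t : ℝ≥0) : ℝ := 2 - (1 + (t : ℝ))⁻¹

theorem gain_zero : gain 0 = 1 := by norm_num [gain]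

theorem gain_pos (t : ℝ≥0) : 0 < gain t := by
  have : (1 + (t : ℝ))⁻¹ ≤ 1 := inv_le_one_of_one_le₀ (le_add_of_nonneg_right t.2)
  unfold gain
  linarith

theorem gain_le_two (t : ℝ≥0) : gain t ≤ 2 := by
  have : 0 ≤ (1 + (t : ℝ))⁻¹ := by positivity
  unfold gain
  linarith

theorem strictMono_gain : StrictMono gain := fun s t hst => by
  have : (1 + (t : ℝ))⁻¹ < (1 + (s : ℝ))⁻¹ := by
    gcongr
  unfold gain
  linarith

theorem continuous_gain : Continuous gain :=
  continuous_const.sub <| (continuous_const.add NNReal.continuous_coe).inv₀ fun t =>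
    (add_pos_of_pos_of_nonneg one_pos t.2).ne'

theorem tendsto_gain_atTop : Tendsto gain atTop (𝓝 2) := by
  have h : Tendsto (fun t : ℝ≥0 => 1 + (t : ℝ)) atTop atTop :=
    tendsto_atTop_add_const_left _ 1 (NNReal.tendsto_coe_atTop.2 tendsto_id)
  have := (tendsto_inv_atTop_zero.comp h).const_sub 2
  rwa [sub_zero] at this

theorem bddAbove_range_mul_gain {g : ℝ≥0 → ℝ} (hg : Continuous g)
    (hlim : Tendsto g atTop (𝓝 0)) : BddAbove (range fun t => g t * gain t) :=
  (hg.mul continuous_gain).bddAbove_range_of_tendsto_cocompact (c := 0) <| by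
    rw [cocompact_eq_atTop, ← zero_mul 2]
    exact hlim.mul tendsto_gain_atTop

theorem ciSup_comp_add_mul_gain_lt {g : ℝ≥0 → ℝ} (hg : Continuous g)
    (hlim : Tendsto g atTop (𝓝 0)) (hg0 : 0 < g 0) {s : ℝ≥0} (hs : 0 < s) :
    ⨆ t, g (t + s) * gain t < ⨆ t, g t * gain t := by
  have hbdd := bddAbove_range_mul_gain hg hlim
  set h : ℝ≥0 → ℝ := fun t => g (t + s) * gain t
  have hh : Continuous h := (hg.comp (continuous_id.add continuous_const)).mul continuous_gain
  have hhlim : Tendsto h atTop (𝓝 0) := by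
    rw [← zero_mul 2]
    exact (hlim.comp (tendsto_atTop_mono (fun t => le_self_add) tendsto_id)).mul
      tendsto_gain_atTop
  by_cases hpos : ∃ t, 0 < h t
  · obtain ⟨t₁, ht₁⟩ := hpos
    obtain ⟨t₀, ht₀⟩ := hh.exists_forall_ge' t₁
      (by rw [cocompact_eq_atTop]; exact hhlim.eventually (ge_mem_nhds ht₁))
    have hgt₀ : 0 < g (t₀ + s) := pos_of_mul_pos_left (ht₁.trans_le (ht₀ t₁)) (gain_pos t₀).le
    calc ⨆ t, h t ≤ h t₀ := ciSup_le ht₀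
      _ < g (t₀ + s) * gain (t₀ + s) :=
        mul_lt_mul_of_pos_left (strictMono_gain (lt_add_of_pos_right t₀ hs)) hgt₀
      _ ≤ ⨆ t, g t * gain t := le_ciSup hbdd _
  · simp only [not_exists, not_lt] at hpos
    calc ⨆ t, h t ≤ 0 := ciSup_le hpos
      _ < g 0 * gain 0 := by rwa [gain_zero, mul_one]
      _ ≤ ⨆ t, g t * gain t := le_ciSup hbdd 0

theorem TendstoUniformlyOn.mul_gain {α : Type*} {F : ℝ≥0 → α → ℝ} {N : Set α}
    (h : TendstoUniformlyOn F 0 atTop N) :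
    TendstoUniformlyOn (fun t y => F t y * gain t) 0 atTop N := by
  refine Metric.tendstoUniformlyOn_iff.2 fun ε hε => ?_
  filter_upwards [Metric.tendstoUniformlyOn_iff.1 h (ε / 2) (half_pos hε)] with t ht y hy
  have hFy : |F t y| < ε / 2 := by simpa [Real.dist_eq] using ht y hy
  calc dist 0 (F t y * gain t) = |F t y| * gain t := by
        simp [Real.dist_eq, abs_mul, abs_of_pos (gain_pos t)]
    _ ≤ |F t y| * 2 := mul_le_mul_of_nonneg_left (gain_le_two t) (abs_nonneg _)
    _ < ε := by linarith

theorem upperSemicontinuousAt_ciSup {X : Type*} [TopologicalSpace X] {F : ℝ≥0 → X → ℝ}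
    {x₀ : X} {N : Set X} (hF : ∀ t, ContinuousAt (fun p : X × ℝ≥0 => F p.2 p.1) (x₀, t))
    (hN : N ∈ 𝓝 x₀) (hunif : TendstoUniformlyOn F 0 atTop N) :
    UpperSemicontinuousAt (fun y => ⨆ t, F t y) x₀ := by
  have hFx₀ : Continuous fun t => F t x₀ := continuous_iff_continuousAt.2 fun t =>
    (hF t).comp (f := fun t => (x₀, t)) (continuousAt_const.prodMk continuousAt_id)
  have hlim : Tendsto (fun t => F t x₀) atTop (𝓝 0) := hunif.tendsto_at (mem_of_mem_nhds hN)
  have hbdd : BddAbove (range fun t => F t x₀) :=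
    hFx₀.bddAbove_range_of_tendsto_cocompact (by rwa [cocompact_eq_atTop])
  have hnonneg : 0 ≤ ⨆ t, F t x₀ := le_of_tendsto hlim (Eventually.of_forall (le_ciSup hbdd))
  intro b hb
  obtain ⟨c, hζc, hcb⟩ := exists_between hb
  obtain ⟨τ, hτ⟩ := eventually_atTop.1
    (Metric.tendstoUniformlyOn_iff.1 hunif c (hnonneg.trans_lt hζc))
  have hhead : ∀ᶠ y in 𝓝 x₀, ∀ t ∈ Icc 0 τ, F t y < c :=
    isCompact_Icc.eventually_forall_of_forall_eventually fun t _ =>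
      (hF t).eventually (gt_mem_nhds ((le_ciSup hbdd t).trans_lt hζc))
  filter_upwards [hhead, hN] with y hy hyN
  refine (ciSup_le fun t => ?_).trans_lt hcb
  rcases le_or_gt t τ with htτ | hτt
  · exact (hy t ⟨zero_le, htτ⟩).le
  · have := hτ t hτt.le y hyN
    rw [Pi.zero_apply, Real.dist_eq, zero_sub, abs_neg] at this
    exact (le_abs_self _).trans this.le

theorem isClosed_sublevel_of_le {X : Type*} [TopologicalSpace X] {Ω : Set X} {ψ ζ : X → ℝ}
    {a : ℝ} (hζ : ContinuousOn ζ Ω) (hle : ∀ x ∈ Ω, ψ x ≤ ζ x)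
    (hψ : IsClosed {x | x ∈ Ω ∧ ψ x ≤ a}) : IsClosed {x | x ∈ Ω ∧ ζ x ≤ a} := by
  convert (hζ.mono fun x hx => hx.1).preimage_isClosed_of_isClosed hψ isClosed_Iic using 1
  ext x
  exact ⟨fun h => ⟨⟨h.1, (hle x h.1).trans h.2⟩, h.2⟩, fun h => ⟨h.1.1, h.2⟩⟩

noncomputable def weightedOrbitSup {X : Type*} (Φ : ℝ≥0 × X → X) (ψ : X → ℝ) (x : X) : ℝ :=
  ⨆ t : ℝ≥0, ψ (Φ (t, x)) * gain t

section WeightedOrbitSup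

variable {X : Type*} {Φ : ℝ≥0 × X → X} {ψ : X → ℝ} {x : X}

theorem weightedOrbitSup_eq_zero (h : ∀ t, ψ (Φ (t, x)) = 0) : weightedOrbitSup Φ ψ x = 0 := by
  simp [weightedOrbitSup, h]

theorem weightedOrbitSup_flow (hadd : ∀ (t s : ℝ≥0) (x : X), Φ (t + s, x) = Φ (t, Φ (s, x)))
    (s : ℝ≥0) : weightedOrbitSup Φ ψ (Φ (s, x)) = ⨆ t, ψ (Φ (t + s, x)) * gain t := by
  simp only [weightedOrbitSup, hadd]

theorem le_weightedOrbitSup (h0 : ∀ x : X, Φ (0, x) = x)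
    (hg : Continuous fun t => ψ (Φ (t, x))) (hlim : Tendsto (fun t => ψ (Φ (t, x))) atTop (𝓝 0)) :
    ψ x ≤ weightedOrbitSup Φ ψ x := by
  simpa [weightedOrbitSup, h0, gain_zero] using le_ciSup (bddAbove_range_mul_gain hg hlim) 0

theorem weightedOrbitSup_flow_lt (h0 : ∀ x : X, Φ (0, x) = x)
    (hadd : ∀ (t s : ℝ≥0) (x : X), Φ (t + s, x) = Φ (t, Φ (s, x)))
    (hg : Continuous fun t => ψ (Φ (t, x))) (hlim : Tendsto (fun t => ψ (Φ (t, x))) atTop (𝓝 0))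
    (hψx : 0 < ψ x) {s : ℝ≥0} (hs : 0 < s) :
    weightedOrbitSup Φ ψ (Φ (s, x)) < weightedOrbitSup Φ ψ x := by
  rw [weightedOrbitSup_flow hadd]
  exact ciSup_comp_add_mul_gain_lt hg hlim (by rwa [h0]) hs

variable [TopologicalSpace X] {Ω : Set X}

theorem continuous_comp_flow (hcont : Continuous Φ) (hψ : ContinuousOn ψ Ω)
    (hΩ : ∀ t, MapsTo (fun x => Φ (t, x)) Ω Ω) (hx : x ∈ Ω) :
    Continuous fun t => ψ (Φ (t, x)) :=
  hψ.comp_continuous (hcont.comp (continuous_id.prodMk continuous_const)) fun t => hΩ t hx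


theorem continuousOn_weightedOrbitSup (hcont : Continuous Φ) (hΩo : IsOpen Ω)
    (hψ : ContinuousOn ψ Ω) (hΩ : ∀ t, MapsTo (fun x => Φ (t, x)) Ω Ω)
    (hunif : ∀ x ∈ Ω, ∃ N ∈ 𝓝 x, TendstoUniformlyOn (fun t y => ψ (Φ (t, y))) 0 atTop N) :
    ContinuousOn (weightedOrbitSup Φ ψ) Ω := by
  intro x hx
  refine ContinuousAt.continuousWithinAt ?_
  have hF : ∀ t, ContinuousAt (fun p : X × ℝ≥0 => ψ (Φ (p.2, p.1)) * gain p.2) (x, t) :=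
    fun t => (ContinuousAt.comp (f := fun p : X × ℝ≥0 => Φ (p.2, p.1))
      (hψ.continuousAt (hΩo.mem_nhds (hΩ t hx))) (hcont.comp continuous_swap).continuousAt).mul
        (continuous_gain.comp continuous_snd).continuousAt
  obtain ⟨N, hN, hunifN⟩ := hunif x hx
  have hbdd : ∀ᶠ y in 𝓝 x, BddAbove (range fun t => ψ (Φ (t, y)) * gain t) := by
    filter_upwards [hΩo.mem_nhds hx] with y hy
    obtain ⟨N', hN', hunifN'⟩ := hunif y hy
    exact bddAbove_range_mul_gain (continuous_comp_flow hcont hψ hΩ hy)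
      (hunifN'.tendsto_at (mem_of_mem_nhds hN'))
  rw [continuousAt_iff_lower_upperSemicontinuousAt]
  exact ⟨lowerSemicontinuousAt_ciSup hbdd fun t =>
      ((hF t).comp (f := fun y => (y, t))
        (continuousAt_id.prodMk continuousAt_const)).lowerSemicontinuousAt,
    upperSemicontinuousAt_ciSup hF hN hunifN.mul_gain⟩

end WeightedOrbitSup

theorem attractor_exists_lyapunov_general {X : Type*} [TopologicalSpace X]
    (Φ : ℝ≥0 × X → X) (hcont : Continuous Φ)
    (h0 : ∀ x : X, Φ (0, x) = x)
    (hadd : ∀ (t s : ℝ≥0) (x : X), Φ (t + s, x) = Φ (t, Φ (s, x)))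
    (A : Set X) (hA : IsAttractor Φ A)
    (ψ : X → ℝ)
    (hψc : ContinuousOn ψ (attractionRegion Φ A))
    (hψ0 : ∀ x ∈ attractionRegion Φ A, 0 ≤ ψ x)
    (hψz : ∀ x ∈ attractionRegion Φ A, (ψ x = 0 ↔ x ∈ A)) :
    ∃ ζ : X → ℝ,
      ContinuousOn ζ (attractionRegion Φ A) ∧
      (∀ x ∈ attractionRegion Φ A, 0 ≤ ζ x) ∧
      (∀ x ∈ attractionRegion Φ A, (ζ x = 0 ↔ x ∈ A)) ∧
      (∀ x ∈ attractionRegion Φ A \ A, ∀ t : ℝ≥0, 0 < t →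
        Φ (t, x) ∈ attractionRegion Φ A ∧ ζ (Φ (t, x)) < ζ x) ∧
      ((∀ a : ℝ, 0 ≤ a → IsClosed {x | x ∈ attractionRegion Φ A ∧ ψ x ≤ a}) →
        ∀ a : ℝ, 0 ≤ a → IsClosed {x | x ∈ attractionRegion Φ A ∧ ζ x ≤ a}) := by
  obtain ⟨-, -, hAinv, U, hclosure, hU, -⟩ := hA
  have hAU : A ⊆ interior U := subset_closure.trans hclosure
  have hAΩ : A ⊆ attractionRegion Φ A := hAinv.attracts_self.subset_attractionRegion
  have hΩo : IsOpen (attractionRegion Φ A) := isOpen_attractionRegion hcont hadd hAU hU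
  have hΩ := mapsTo_flow_attractionRegion (A := A) hadd
  have hψA : ∀ a ∈ A, ψ a = 0 := fun a ha => (hψz a (hAΩ ha)).2 ha
  have hunif : ∀ x ∈ attractionRegion Φ A,
      ∃ N ∈ 𝓝 x, TendstoUniformlyOn (fun t y => ψ (Φ (t, y))) 0 atTop N := fun x hx =>
    let ⟨N, hN, hNA⟩ := exists_mem_nhds_attracts hcont hadd hAU hU hx
    ⟨N, hN, hNA.tendstoUniformlyOn_comp hΩo hψc hAΩ hψA⟩
  have hlim : ∀ x ∈ attractionRegion Φ A, Tendsto (fun t => ψ (Φ (t, x))) atTop (𝓝 0) :=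
    fun x hx => hx.tendstoUniformlyOn_comp hΩo hψc hAΩ hψA |>.tendsto_at rfl
  have horbit := fun x (hx : x ∈ attractionRegion Φ A) => continuous_comp_flow hcont hψc hΩ hx
  have hle : ∀ x ∈ attractionRegion Φ A, ψ x ≤ weightedOrbitSup Φ ψ x := fun x hx =>
    le_weightedOrbitSup h0 (horbit x hx) (hlim x hx)
  have hζc := continuousOn_weightedOrbitSup hcont hΩo hψc hΩ hunif
  refine ⟨weightedOrbitSup Φ ψ, hζc, fun x hx => (hψ0 x hx).trans (hle x hx),
    fun x hx => ⟨fun hζx => ?_, fun hxA => ?_⟩, ?_,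
    fun H a ha => isClosed_sublevel_of_le hζc hle (H a ha)⟩
  · exact (hψz x hx).1 (le_antisymm (hζx ▸ hle x hx) (hψ0 x hx))
  · exact weightedOrbitSup_eq_zero fun t => hψA _ (hAinv.mapsTo t hxA)
  · rintro x ⟨hx, hxA⟩ s hs
    have hψx : 0 < ψ x := (hψ0 x hx).lt_of_ne fun h => hxA ((hψz x hx).1 h.symm)
    exact ⟨hΩ s hx, weightedOrbitSup_flow_lt h0 hadd (horbit x hx) (hlim x hx) hψx hs⟩

/-- a closed attractor `A` possessing a `𝒦₀` function `ψ` on its region of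
attraction has a Lyapunov function `ζ` there, which is moreover `𝒦₀^∞` whenever `ψ` is. -/
theorem attractor_exists_lyapunov {X : Type*} [TopologicalSpace X] [T2Space X]
    (Φ : ℝ≥0 × X → X) (hcont : Continuous Φ)
    (h0 : ∀ x : X, Φ (0, x) = x)
    (hadd : ∀ (t s : ℝ≥0) (x : X), Φ (t + s, x) = Φ (t, Φ (s, x)))
    (A : Set X) (hA : IsAttractor Φ A) (hAc : IsClosed A)
    (ψ : X → ℝ)
    (hψc : ContinuousOn ψ (attractionRegion Φ A))
    (hψ0 : ∀ x ∈ attractionRegion Φ A, 0 ≤ ψ x)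
    (hψz : ∀ x ∈ attractionRegion Φ A, (ψ x = 0 ↔ x ∈ A)) :
    ∃ ζ : X → ℝ,
      ContinuousOn ζ (attractionRegion Φ A) ∧
      (∀ x ∈ attractionRegion Φ A, 0 ≤ ζ x) ∧
      (∀ x ∈ attractionRegion Φ A, (ζ x = 0 ↔ x ∈ A)) ∧
      (∀ x ∈ attractionRegion Φ A \ A, ∀ t : ℝ≥0, 0 < t →
        Φ (t, x) ∈ attractionRegion Φ A ∧ ζ (Φ (t, x)) < ζ x) ∧
      ((∀ a : ℝ, 0 ≤ a → IsClosed {x | x ∈ attractionRegion Φ A ∧ ψ x ≤ a}) →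
        ∀ a : ℝ, 0 ≤ a → IsClosed {x | x ∈ attractionRegion Φ A ∧ ζ x ≤ a}) :=
  attractor_exists_lyapunov_general Φ hcont h0 hadd A hA ψ hψc hψ0 hψz
end

section
/- Let Y be a metric space, U an open subset of Y, and A a nonempty subset of U that is closed in Y. Then there exists a continuous function δ : U → [0,∞) such that δ(x) = 0 if and only if x ∈ A, and for every a ≥ 0 the sublevel set {x ∈ U : δ(x) ≤ a} is closed in Y. (In fact one may take δ(x) = dist(x,A) if U = Y, and δ(x) = dist(x,A)/min{dist(x, Y∖U), 1} if U ≠ Y.) -/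
/-- existence of a `𝒦₀^∞` function of a nonempty set `A` (closed in `Y`)
on an open set `U ⊇ A` in a metric space `Y`. -/
theorem exists_K0_infty_function {Y : Type*} [MetricSpace Y]
    (U : Set Y) (hU : IsOpen U)
    (A : Set Y) (hA : A.Nonempty) (hAU : A ⊆ U) (hAc : IsClosed A) :
    ∃ δ : Y → ℝ,
      ContinuousOn δ U ∧
      (∀ x ∈ U, 0 ≤ δ x) ∧
      (∀ x ∈ U, (δ x = 0 ↔ x ∈ A)) ∧
      (∀ a : ℝ, 0 ≤ a → IsClosed {x | x ∈ U ∧ δ x ≤ a}) := by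
  by_cases hc : Uᶜ.Nonempty
  · -- δ x = infDist x A / infDist x Uᶜ
    have hdc : ∀ x ∈ U, 0 < Metric.infDist x Uᶜ := by
      intro x hx
      rcases (Metric.infDist_nonneg (s := Uᶜ) (x := x)).lt_or_eq with h | h
      · exact h
      · exfalso
        have := (hU.isClosed_compl.mem_iff_infDist_zero hc).2 h.symm
        exact this hx
    refine ⟨fun x => Metric.infDist x A / Metric.infDist x Uᶜ, ?_, ?_, ?_, ?_⟩
    · exact ((Metric.continuous_infDist_pt A).continuousOn).div
        ((Metric.continuous_infDist_pt Uᶜ).continuousOn)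
        (fun x hx => (hdc x hx).ne')
    · intro x _
      exact div_nonneg Metric.infDist_nonneg Metric.infDist_nonneg
    · intro x hx
      rw [div_eq_zero_iff]
      constructor
      · rintro (h | h)
        · exact (hAc.mem_iff_infDist_zero hA).2 h
        · exact absurd h (hdc x hx).ne'
      · intro h
        exact Or.inl (Metric.infDist_zero_of_mem h)
    · intro a ha
      have : {x | x ∈ U ∧ Metric.infDist x A / Metric.infDist x Uᶜ ≤ a} =
          {x | Metric.infDist x A ≤ a * Metric.infDist x Uᶜ} := by
        ext x
        simp only [Set.mem_setOf_eq]
        constructor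
        · rintro ⟨hx, h⟩
          exact (div_le_iff₀ (hdc x hx)).1 h
        · intro h
          have hxU : x ∈ U := by
            by_contra hxU
            have h0 : Metric.infDist x Uᶜ = 0 := Metric.infDist_zero_of_mem hxU
            rw [h0, mul_zero] at h
            have : Metric.infDist x A = 0 :=
              le_antisymm h Metric.infDist_nonneg
            exact hxU (hAU ((hAc.mem_iff_infDist_zero hA).2 this))
          exact ⟨hxU, (div_le_iff₀ (hdc x hxU)).2 h⟩
      rw [this]
      exact isClosed_le (Metric.continuous_infDist_pt A)
        (continuous_const.mul (Metric.continuous_infDist_pt Uᶜ))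
  · -- U = univ
    have hUuniv : U = Set.univ := by
      rw [Set.not_nonempty_iff_eq_empty, Set.compl_empty_iff] at hc
      exact hc
    refine ⟨fun x => Metric.infDist x A, (Metric.continuous_infDist_pt A).continuousOn,
      fun x _ => Metric.infDist_nonneg, fun x _ => (hAc.mem_iff_infDist_zero hA).symm, ?_⟩
    intro a ha
    have : {x | x ∈ U ∧ Metric.infDist x A ≤ a} = {x | Metric.infDist x A ≤ a} := by
      ext x; simp [hUuniv]
    rw [this]
    exact isClosed_le (Metric.continuous_infDist_pt A) continuous_const
end

section
/- Let H be a compact topological space, Y and X real normed vector spaces, and f : H × Y → X a continuous map. Assume: (i) there exists l > 0 such that ‖f(h,y) − f(h,y′)‖ ≤ l·‖y − y′‖ for all h ∈ H and y, y′ ∈ Y; (ii) for every ε > 0 there exists R₁ > 0 such that ‖f(h,y)‖ ≤ ε·‖y‖ whenever h ∈ H and ‖y‖ ≥ R₁. Let (cₙ) be a sequence of positive reals with cₙ → ∞, let λₙ ∈ [0,1], and fix R₀ ≥ 0. Then Sₙ := sup{ cₙ⁻¹ · λₙ · ‖f(h, cₙ·y)‖ : h ∈ H, y ∈ Y, ‖y‖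 ≤ R₀ } tends to 0 as n → ∞. -/
/-!
Sublinearity at infinity together with the Lipschitz bound near the origin give, for every
`ε > 0`, a uniform affine bound `‖f (h, z)‖ ≤ ε ‖z‖ + C_ε`. Rescaling by `cₙ` turns it into
`Sₙ ≤ ε R₀ + C_ε / cₙ`, whose right-hand side is eventually as close to `ε R₀` as we like.
-/

open Filter Topology

section AffineBound

variable {H Y X : Type*} [NormedAddCommGroup Y] [NormedAddCommGroup X]

lemma norm_le_mul_norm_add_of_lipschitz_of_sublinear (f : H × Y → X) {M l ε R₁ : ℝ}
    (hM : ∀ h, ‖f (h, 0)‖ ≤ M) (hl : 0 ≤ l)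
    (hLip : ∀ (h : H) (y y' : Y), ‖f (h, y) - f (h, y')‖ ≤ l * ‖y - y'‖)
    (hε : 0 ≤ ε) (hR₁ : 0 ≤ R₁) (hfar : ∀ (h : H) (y : Y), R₁ ≤ ‖y‖ → ‖f (h, y)‖ ≤ ε * ‖y‖)
    (h : H) (y : Y) :
    ‖f (h, y)‖ ≤ ε * ‖y‖ + (M + l * R₁) := by
  have hM₀ : 0 ≤ M := (norm_nonneg _).trans (hM h)
  rcases le_or_gt R₁ ‖y‖ with hy | hy
  · linarith [hfar h y hy, mul_nonneg hl hR₁]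
  · calc ‖f (h, y)‖ ≤ ‖f (h, 0)‖ + ‖f (h, y) - f (h, 0)‖ := norm_le_norm_add_norm_sub' _ _
      _ ≤ M + l * ‖y‖ := by simpa using add_le_add (hM h) (hLip h y 0)
      _ ≤ ε * ‖y‖ + (M + l * R₁) := by nlinarith [mul_nonneg hε (norm_nonneg y)]

lemma exists_norm_le_mul_norm_add (f : H × Y → X) {M l : ℝ}
    (hM : ∀ h, ‖f (h, 0)‖ ≤ M) (hl : 0 ≤ l)
    (hLip : ∀ (h : H) (y y' : Y), ‖f (h, y) - f (h, y')‖ ≤ l * ‖y - y'‖)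
    (hsub : ∀ ε : ℝ, 0 < ε → ∃ R₁ : ℝ, 0 < R₁ ∧
      ∀ (h : H) (y : Y), R₁ ≤ ‖y‖ → ‖f (h, y)‖ ≤ ε * ‖y‖)
    {ε : ℝ} (hε : 0 < ε) :
    ∃ C, ∀ h y, ‖f (h, y)‖ ≤ ε * ‖y‖ + C := by
  obtain ⟨R₁, hR₁, hfar⟩ := hsub ε hε
  exact ⟨_, norm_le_mul_norm_add_of_lipschitz_of_sublinear f hM hl hLip hε.le hR₁.le hfar⟩

end AffineBound

section Rescaling

variable {H Y X : Type*} [NormedAddCommGroup Y] [NormedSpace ℝ Y] [NormedAddCommGroup X]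

lemma inv_mul_mul_norm_smul_le {g : Y → X} {ε C c t R₀ : ℝ}
    (hg : ∀ y, ‖g y‖ ≤ ε * ‖y‖ + C) (hε : 0 ≤ ε) (hc : 0 < c) (ht : t ∈ Set.Icc (0 : ℝ) 1)
    {y : Y} (hy : ‖y‖ ≤ R₀) :
    c⁻¹ * t * ‖g (c • y)‖ ≤ ε * R₀ + C / c :=
  calc c⁻¹ * t * ‖g (c • y)‖ ≤ c⁻¹ * ‖g (c • y)‖ := by
        rw [mul_assoc]
        gcongr
        exact mul_le_of_le_one_left (norm_nonneg _) ht.2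
    _ ≤ c⁻¹ * (ε * ‖c • y‖ + C) := by gcongr; exact hg _
    _ = ε * ‖y‖ + C / c := by
        rw [norm_smul, Real.norm_of_nonneg hc.le]
        field_simp
    _ ≤ ε * R₀ + C / c := by gcongr

lemma sSup_rescaled_le (f : H × Y → X) {ε C c t R₀ : ℝ}
    (hf : ∀ h y, ‖f (h, y)‖ ≤ ε * ‖y‖ + C) (hε : 0 ≤ ε) (hc : 0 < c)
    (ht : t ∈ Set.Icc (0 : ℝ) 1) :
    sSup {r : ℝ | ∃ (h : H) (y : Y), ‖y‖ ≤ R₀ ∧ r = c⁻¹ * t * ‖f (h, c • y)‖} ≤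
      max (ε * R₀ + C / c) 0 := by
  refine Real.sSup_le ?_ (le_max_right _ _)
  rintro r ⟨h, y, hy, rfl⟩
  exact (inv_mul_mul_norm_smul_le (hf h) hε hc ht hy).trans (le_max_left _ _)

lemma sSup_rescaled_nonneg (f : H × Y → X) {c t R₀ : ℝ} (hc : 0 < c)
    (ht : t ∈ Set.Icc (0 : ℝ) 1) :
    0 ≤ sSup {r : ℝ | ∃ (h : H) (y : Y), ‖y‖ ≤ R₀ ∧ r = c⁻¹ * t * ‖f (h, c • y)‖} := by
  refine Real.sSup_nonneg ?_
  rintro r ⟨h, y, -, rfl⟩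
  have := ht.1
  positivity

end Rescaling

theorem rescaled_sup_tendsto_zero_general {H Y X : Type*} [TopologicalSpace H] [CompactSpace H]
    [NormedAddCommGroup Y] [NormedSpace ℝ Y]
    [NormedAddCommGroup X]
    (f : H × Y → X) (hf : Continuous f)
    (l : ℝ) (hl : 0 < l)
    (hLip : ∀ (h : H) (y y' : Y), ‖f (h, y) - f (h, y')‖ ≤ l * ‖y - y'‖)
    (hsub : ∀ ε : ℝ, 0 < ε → ∃ R₁ : ℝ, 0 < R₁ ∧
      ∀ (h : H) (y : Y), R₁ ≤ ‖y‖ → ‖f (h, y)‖ ≤ ε * ‖y‖)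
    (c : ℕ → ℝ) (hcpos : ∀ n, 0 < c n)
    (hc : Filter.Tendsto c Filter.atTop Filter.atTop)
    (lam : ℕ → ℝ) (hlam : ∀ n, lam n ∈ Set.Icc (0 : ℝ) 1)
    (R₀ : ℝ) :
    Filter.Tendsto
      (fun n => sSup {r : ℝ | ∃ (h : H) (y : Y), ‖y‖ ≤ R₀ ∧
        r = (c n)⁻¹ * lam n * ‖f (h, c n • y)‖})
      Filter.atTop (nhds 0) := by
  obtain ⟨M, hM⟩ := isCompact_univ.exists_bound_of_continuousOn
    (hf.comp (continuous_id.prodMk continuous_const) : Continuous fun h : H => f (h, 0)).continuousOn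
  refine tendsto_order.2 ⟨fun a ha => Eventually.of_forall fun n =>
    ha.trans_le (sSup_rescaled_nonneg f (hcpos n) (hlam n)), fun a ha => ?_⟩
  obtain ⟨ε, hε, hεR₀⟩ := exists_pos_mul_lt ha R₀
  obtain ⟨C, hC⟩ := exists_norm_le_mul_norm_add f (fun h => hM h trivial) hl.le hLip hsub hε
  have hbound : Tendsto (fun n => max (ε * R₀ + C / c n) 0) atTop (𝓝 (max (ε * R₀ + 0) 0)) :=
    (tendsto_const_nhds.add (hc.const_div_atTop C)).max tendsto_const_nhds
  filter_upwards [hbound.eventually (gt_mem_nhds (by rw [add_zero, mul_comm]; exact max_lt hεR₀ ha))]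
    with n hn
  exact (sSup_rescaled_le f hC hε.le (hcpos n) (hlam n)).trans_lt hn

/-- if `f : H × Y → X` is continuous, globally Lipschitz in the second variable
uniformly in `h ∈ H` (with `H` compact), and sublinear at infinity uniformly in `h`, then for
any positive `cₙ → ∞`, any `λₙ ∈ [0,1]` and any `R₀ ≥ 0`, the quantities
`Sₙ = sup { cₙ⁻¹ λₙ ‖f(h, cₙ y)‖ : h ∈ H, ‖y‖ ≤ R₀ }` tend to `0`. -/
theorem rescaled_sup_tendsto_zero {H Y X : Type*} [TopologicalSpace H] [CompactSpace H]
    [NormedAddCommGroup Y] [NormedSpace ℝ Y]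
    [NormedAddCommGroup X] [NormedSpace ℝ X]
    (f : H × Y → X) (hf : Continuous f)
    (l : ℝ) (hl : 0 < l)
    (hLip : ∀ (h : H) (y y' : Y), ‖f (h, y) - f (h, y')‖ ≤ l * ‖y - y'‖)
    (hsub : ∀ ε : ℝ, 0 < ε → ∃ R₁ : ℝ, 0 < R₁ ∧
      ∀ (h : H) (y : Y), R₁ ≤ ‖y‖ → ‖f (h, y)‖ ≤ ε * ‖y‖)
    (c : ℕ → ℝ) (hcpos : ∀ n, 0 < c n)
    (hc : Filter.Tendsto c Filter.atTop Filter.atTop)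
    (lam : ℕ → ℝ) (hlam : ∀ n, lam n ∈ Set.Icc (0 : ℝ) 1)
    (R₀ : ℝ) (hR₀ : 0 ≤ R₀) :
    Filter.Tendsto
      (fun n => sSup {r : ℝ | ∃ (h : H) (y : Y), ‖y‖ ≤ R₀ ∧
        r = (c n)⁻¹ * lam n * ‖f (h, c n • y)‖})
      Filter.atTop (nhds 0) :=
  rescaled_sup_tendsto_zero_general f hf l hl hLip hsub c hcpos hc lam hlam R₀
end

section
/- Let X be a topological space and Φ a global semiflow on X. Suppose K ⊆ X satisfies Φ(t,·)''K = K for every t ≥ 0. Then for every x ∈ K there exists a map γ : ℝ → X with γ(ℝ) ⊆ K, γ(0) = x, and γ(t) = Φ(t − s, γ(s)) for all real numbers s ≤ t; that is, through every point of K there passes a full solution of Φ lying entirely in K. -/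
/-!
Since `Φ(1, ·)` maps `K` onto itself, every point of `K` has a backward orbit
`x = g 0, g 1, g 2, …` in `K` with `Φ(1, g (n + 1)) = g n`. Flowing `g n` forward for time
`t + n` gives a value independent of the choice of `n ≥ -t`, and this defines the full solution.
-/

open scoped NNReal

theorem Set.SurjOn.exists_backward_orbit {X : Type*} {f : X → X} {S : Set X}
    (hf : S.SurjOn f S) {x : X} (hx : x ∈ S) :
    ∃ g : ℕ → X, g 0 = x ∧ (∀ n, g n ∈ S) ∧ ∀ n, f (g (n + 1)) = g n := by
  have : Nonempty X := ⟨x⟩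
  refine ⟨fun n => (Function.invFunOn f S)^[n] x, rfl, fun n => ?_, fun n => ?_⟩
  · exact hf.mapsTo_invFunOn.iterate n hx
  · dsimp only
    rw [Function.iterate_succ_apply']
    exact hf.rightInvOn_invFunOn (hf.mapsTo_invFunOn.iterate n hx)

section BackwardOrbit

variable {X : Type*} (Φ : ℝ≥0 × X → X)

noncomputable def backwardExtension (g : ℕ → X) (t : ℝ) : X :=
  Φ ((t + ⌈-t⌉₊).toNNReal, g ⌈-t⌉₊)

variable {Φ} (h0 : ∀ x : X, Φ (0, x) = x)
  (hadd : ∀ (t s : ℝ≥0) (x : X), Φ (t + s, x) = Φ (t, Φ (s, x)))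
  {g : ℕ → X} (hg : ∀ n, Φ (1, g (n + 1)) = g n)
include h0 hadd hg

theorem apply_natCast_of_backward_orbit (n k : ℕ) : Φ (k, g (n + k)) = g n := by
  induction k with
  | zero => simpa using h0 (g n)
  | succ k ih => rw [Nat.cast_succ, hadd, ← add_assoc, hg, ih]

theorem apply_toNNReal_of_backward_orbit {t : ℝ} {n m : ℕ} (ht : -t ≤ n) (hnm : n ≤ m) :
    Φ ((t + m).toNNReal, g m) = Φ ((t + n).toNNReal, g n) := by
  obtain ⟨k, rfl⟩ := Nat.exists_eq_add_of_le hnm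
  have htime : (t + ↑(n + k)).toNNReal = (t + n).toNNReal + k := by
    ext
    simp only [Nat.cast_add, NNReal.coe_add, NNReal.coe_natCast]
    rw [Real.coe_toNNReal _ (by linarith), Real.coe_toNNReal _ (by linarith)]
    ring
  rw [htime, hadd, apply_natCast_of_backward_orbit h0 hadd hg]

theorem backwardExtension_eq {t : ℝ} {n : ℕ} (ht : -t ≤ n) :
    backwardExtension Φ g t = Φ ((t + n).toNNReal, g n) :=
  (apply_toNNReal_of_backward_orbit h0 hadd hg (Nat.le_ceil _) (Nat.ceil_le.2 ht)).symm

theorem backwardExtension_zero : backwardExtension Φ g 0 = g 0 := by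
  simpa [h0] using backwardExtension_eq h0 hadd hg (t := 0) (n := 0) (by simp)

theorem backwardExtension_of_le {s t : ℝ} (hst : s ≤ t) :
    backwardExtension Φ g t = Φ (⟨t - s, sub_nonneg.2 hst⟩, backwardExtension Φ g s) := by
  set n := max ⌈-s⌉₊ ⌈-t⌉₊
  have hs : -s ≤ n := (Nat.le_ceil _).trans (Nat.cast_le.2 (le_max_left _ _))
  have ht : -t ≤ n := (Nat.le_ceil _).trans (Nat.cast_le.2 (le_max_right _ _))
  rw [backwardExtension_eq h0 hadd hg ht, backwardExtension_eq h0 hadd hg hs]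
  refine Eq.trans ?_ (hadd _ _ _)
  congr
  ext
  change ((t + n).toNNReal : ℝ) = (t - s : ℝ) + (s + n).toNNReal
  rw [Real.coe_toNNReal _ (by linarith), Real.coe_toNNReal _ (by linarith)]
  ring

end BackwardOrbit

theorem exists_full_solution_through_invariant_point_general {X : Type*}
    (Φ : ℝ≥0 × X → X)
    (h0 : ∀ x : X, Φ (0, x) = x)
    (hadd : ∀ (t s : ℝ≥0) (x : X), Φ (t + s, x) = Φ (t, Φ (s, x)))
    (K : Set X) (hK : ∀ t : ℝ≥0, (fun x => Φ (t, x)) '' K = K) :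
    ∀ x ∈ K, ∃ γ : ℝ → X, (∀ t : ℝ, γ t ∈ K) ∧ γ 0 = x ∧
      ∀ s t : ℝ, ∀ hst : s ≤ t, γ t = Φ (⟨t - s, sub_nonneg.2 hst⟩, γ s) := by
  intro x hx
  obtain ⟨g, rfl, hgK, hg⟩ := Set.SurjOn.exists_backward_orbit (hK 1).symm.subset hx
  refine ⟨backwardExtension Φ g, fun t => ?_, backwardExtension_zero h0 hadd hg,
    fun s t hst => backwardExtension_of_le h0 hadd hg hst⟩
  rw [← hK]
  exact Set.mem_image_of_mem _ (hgK _)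

/-- if `K` satisfies `Φ(t, ·) '' K = K` for all `t ≥ 0` under a global semiflow
`Φ`, then through every point of `K` there passes a full solution of `Φ` lying in `K`. -/
theorem exists_full_solution_through_invariant_point {X : Type*} [TopologicalSpace X]
    (Φ : ℝ≥0 × X → X) (hcont : Continuous Φ)
    (h0 : ∀ x : X, Φ (0, x) = x)
    (hadd : ∀ (t s : ℝ≥0) (x : X), Φ (t + s, x) = Φ (t, Φ (s, x)))
    (K : Set X) (hK : ∀ t : ℝ≥0, (fun x => Φ (t, x)) '' K = K) :
    ∀ x ∈ K, ∃ γ : ℝ → X, (∀ t : ℝ, γ t ∈ K) ∧ γ 0 = x ∧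
      ∀ s t : ℝ, ∀ hst : s ≤ t, γ t = Φ (⟨t - s, sub_nonneg.2 hst⟩, γ s) :=
  exists_full_solution_through_invariant_point_general Φ h0 hadd K hK
end

section
/- Let X be a Hausdorff topological space, Φ a global semiflow on X, and 𝒜 an attractor of Φ. Then the region of attraction Ω(𝒜) is an open subset of X, and 𝒜 attracts every compact subset of Ω(𝒜). -/
open scoped NNReal

open scoped Topology

/-!
A point of `Ω(A)` eventually enters the open set `interior U`, where `U` is the neighbourhood
attracted by `A`; by continuity of `Φ(t, ·)` so does a whole neighbourhood of it, at the same
time `t`. Everything that enters `U` is attracted by `A`, so `Ω(A)` is open; and a compact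
`B ⊆ Ω(A)` is covered by finitely many such neighbourhoods, so it enters `U` within a bounded
time and is attracted uniformly.
-/

lemma IsCompact.exists_bound_of_forall_exists_mem_nhds {X ι : Type*} [TopologicalSpace X]
    [SemilatticeSup ι] [Nonempty ι] {B : Set X} (hB : IsCompact B) (f : ι → Set X)
    (hf : ∀ x ∈ B, ∃ i, f i ∈ 𝓝 x) : ∃ T, ∀ b ∈ B, ∃ i ≤ T, b ∈ f i := by
  refine hB.induction_on (p := fun s => ∃ T, ∀ b ∈ s, ∃ i ≤ T, b ∈ f i) ?_ ?_ ?_ ?_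
  · exact ⟨Classical.arbitrary ι, fun _ hb => hb.elim⟩
  · rintro s t hst ⟨T, hT⟩
    exact ⟨T, fun b hb => hT b (hst hb)⟩
  · rintro s t ⟨S, hS⟩ ⟨T, hT⟩
    refine ⟨S ⊔ T, fun b hb => ?_⟩
    rcases hb with hb | hb
    · obtain ⟨i, hi, hbi⟩ := hS b hb
      exact ⟨i, hi.trans le_sup_left, hbi⟩
    · obtain ⟨i, hi, hbi⟩ := hT b hb
      exact ⟨i, hi.trans le_sup_right, hbi⟩
  · intro x hx
    obtain ⟨i, hi⟩ := hf x hx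
    exact ⟨f i, mem_nhdsWithin_of_mem_nhds hi, i, fun b hb => ⟨i, le_rfl, hb⟩⟩

section Semiflow

variable {X : Type*} [TopologicalSpace X] {Φ : ℝ≥0 × X → X} {A B U V : Set X}

lemma Attracts.of_forall_exists_le_mem
    (hadd : ∀ (t s : ℝ≥0) (x : X), Φ (t + s, x) = Φ (t, Φ (s, x)))
    (hU : Attracts Φ A U) (T : ℝ≥0) (hB : ∀ b ∈ B, ∃ t ≤ T, Φ (t, b) ∈ U) : Attracts Φ A B := by
  intro V hV hAV
  obtain ⟨T', hT'⟩ := hU V hV hAV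
  refine ⟨T' + T, fun t ht b hb => ?_⟩
  obtain ⟨t₀, ht₀, hbU⟩ := hB b hb
  have ht₀t : t₀ ≤ t := ht₀.trans (le_add_self.trans ht.le)
  have hlate : T' < t - t₀ := lt_tsub_iff_right.mpr ((add_le_add_right ht₀ T').trans_lt ht)
  rw [← tsub_add_cancel_of_le ht₀t, hadd]
  exact hT' _ hlate _ hbU

lemma Attracts.exists_eventually_nhds_mem (hΦ : ∀ t, Continuous fun x => Φ (t, x)) {x : X}
    (hx : Attracts Φ A {x}) (hV : IsOpen V) (hAV : A ⊆ V) :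
    ∃ t, ∀ᶠ y in 𝓝 x, Φ (t, y) ∈ V := by
  obtain ⟨T, hT⟩ := hx V hV hAV
  exact ⟨T + 1, (hΦ _).continuousAt.preimage_mem_nhds
    (hV.mem_nhds (hT (T + 1) (lt_add_one T) x rfl))⟩

end Semiflow

theorem attractionRegion_isOpen_and_attracts_compact_general {X : Type*} [TopologicalSpace X]
    (Φ : ℝ≥0 × X → X) (hcont : Continuous Φ)
    (hadd : ∀ (t s : ℝ≥0) (x : X), Φ (t + s, x) = Φ (t, Φ (s, x)))
    (A : Set X) (hA : IsAttractor Φ A) :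
    IsOpen (attractionRegion Φ A) ∧
    ∀ B : Set X, B ⊆ attractionRegion Φ A → IsCompact B → Attracts Φ A B := by
  obtain ⟨-, -, -, U, hAU, hU, -⟩ := hA
  have hΦ : ∀ t, Continuous fun x => Φ (t, x) := fun t => by fun_prop
  have hlocal : ∀ x ∈ attractionRegion Φ A, ∃ t, ∀ᶠ y in 𝓝 x, Φ (t, y) ∈ U := by
    intro x hx
    obtain ⟨t, ht⟩ := hx.exists_eventually_nhds_mem hΦ isOpen_interior
      (subset_closure.trans hAU)
    exact ⟨t, ht.mono fun _ hy => interior_subset hy⟩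
  refine ⟨isOpen_iff_mem_nhds.mpr fun x hx => ?_, fun B hB hBc => ?_⟩
  · obtain ⟨t, ht⟩ := hlocal x hx
    filter_upwards [ht] with y hy
    exact hU.of_forall_exists_le_mem hadd t fun b hb => ⟨t, le_rfl, hb ▸ hy⟩
  · obtain ⟨T, hT⟩ := hBc.exists_bound_of_forall_exists_mem_nhds (fun t => {x | Φ (t, x) ∈ U})
      fun x hx => hlocal x (hB hx)
    exact hU.of_forall_exists_le_mem hadd T hT

/-- the region of attraction of an attractor is open, and the attractor
attracts every compact subset of its region of attraction. -/
theorem attractionRegion_isOpen_and_attracts_compact {X : Type*} [TopologicalSpace X]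
    [T2Space X]
    (Φ : ℝ≥0 × X → X) (hcont : Continuous Φ)
    (h0 : ∀ x : X, Φ (0, x) = x)
    (hadd : ∀ (t s : ℝ≥0) (x : X), Φ (t + s, x) = Φ (t, Φ (s, x)))
    (A : Set X) (hA : IsAttractor Φ A) :
    IsOpen (attractionRegion Φ A) ∧
    ∀ B : Set X, B ⊆ attractionRegion Φ A → IsCompact B → Attracts Φ A B :=
  attractionRegion_isOpen_and_attracts_compact_general Φ hcont hadd A hA
end
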